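/- arXiv:1709.01391 — 6 statements merged into one kernel-verified Lean document; each statement's English description precedes it below -/
import Mathlib

section
/- A (left) Leibniz algebra L is nilpotent if and only if every proper subalgebra of L is properly contained in its normalizer. -/
set_option linter.unnecessarySimpa false

/-- The left Leibniz identity for a bilinear bracket `B`. -/
def LeibnizId {F L : Type*} [Field F] [AddCommGroup L] [Module F L]
    (B : L →ₗ[F] L →ₗ[F] L) : Prop :=
  ∀ a b c : L, B a (B b c) = B (B a b) c + B b (B a c)

/-- The span of all brackets `[s,t]` with `s ∈ S`, `t ∈ T`. -/
def lbrk {F L : Type*} [Field F] [AddCommGroup L] [Module F L]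
    (B : L →ₗ[F] L →ₗ[F] L) (S T : Submodule F L) : Submodule F L :=
  Submodule.span F {z : L | ∃ s ∈ S, ∃ t ∈ T, z = B s t}

/-- A subspace closed under the bracket. -/
def IsLeibSubalg {F L : Type*} [Field F] [AddCommGroup L] [Module F L]
    (B : L →ₗ[F] L →ₗ[F] L) (S : Submodule F L) : Prop :=
  ∀ x ∈ S, ∀ y ∈ S, B x y ∈ S

/-- A (two-sided) ideal. -/
def IsLeibIdeal {F L : Type*} [Field F] [AddCommGroup L] [Module F L]
    (B : L →ₗ[F] L →ₗ[F] L) (S : Submodule F L) : Prop :=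
  (∀ x : L, ∀ y ∈ S, B x y ∈ S) ∧ (∀ y ∈ S, ∀ x : L, B y x ∈ S)

/-- Lower central series: `L^1 = L`, `L^{n+1} = [L, L^n]`. -/
def leibLCS {F L : Type*} [Field F] [AddCommGroup L] [Module F L]
    (B : L →ₗ[F] L →ₗ[F] L) : ℕ → Submodule F L
  | 0 => ⊤
  | n + 1 => lbrk B ⊤ (leibLCS B n)

def LeibIsNilpotent {F L : Type*} [Field F] [AddCommGroup L] [Module F L]
    (B : L →ₗ[F] L →ₗ[F] L) : Prop :=
  ∃ n, leibLCS B n = ⊥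

/-- Lower central series of a subalgebra `S`. -/
def leibLCSIn {F L : Type*} [Field F] [AddCommGroup L] [Module F L]
    (B : L →ₗ[F] L →ₗ[F] L) (S : Submodule F L) : ℕ → Submodule F L
  | 0 => S
  | n + 1 => lbrk B S (leibLCSIn B S n)

/-- A subalgebra `S` is nilpotent (as an algebra in its own right). -/
def LeibSubalgNilpotent {F L : Type*} [Field F] [AddCommGroup L] [Module F L]
    (B : L →ₗ[F] L →ₗ[F] L) (S : Submodule F L) : Prop :=
  ∃ n, leibLCSIn B S n = ⊥

/-- Derived series. -/
def leibDerived {F L : Type*} [Field F] [AddCommGroup L] [Module F L]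
    (B : L →ₗ[F] L →ₗ[F] L) : ℕ → Submodule F L
  | 0 => ⊤
  | n + 1 => lbrk B (leibDerived B n) (leibDerived B n)

def LeibIsSolvable {F L : Type*} [Field F] [AddCommGroup L] [Module F L]
    (B : L →ₗ[F] L →ₗ[F] L) : Prop :=
  ∃ n, leibDerived B n = ⊥

/-- The normalizer of a subspace `S`: elements `x` with `[x,S] ⊆ S` and `[S,x] ⊆ S`. -/
def leibNormalizer {F L : Type*} [Field F] [AddCommGroup L] [Module F L]
    (B : L →ₗ[F] L →ₗ[F] L) (S : Submodule F L) : Submodule F L where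
  carrier := {x : L | ∀ m ∈ S, B x m ∈ S ∧ B m x ∈ S}
  add_mem' := by
    intro x y hx hy m hm
    constructor
    · have := S.add_mem (hx m hm).1 (hy m hm).1
      simpa [map_add] using this
    · have := S.add_mem (hx m hm).2 (hy m hm).2
      simpa [map_add] using this
  zero_mem' := by
    intro m hm
    constructor
    · simpa [map_zero] using S.zero_mem
    · simpa [map_zero] using S.zero_mem
  smul_mem' := by
    intro c x hx m hm
    constructor
    · have := S.smul_mem c (hx m hm).1
      simpa [map_smul] using this
    · have := S.smul_mem c (hx m hm).2
      simpa [map_smul] using this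

/-- `Leib(L)`: the span of all squares. -/
def leibLeib {F L : Type*} [Field F] [AddCommGroup L] [Module F L]
    (B : L →ₗ[F] L →ₗ[F] L) : Submodule F L :=
  Submodule.span F {z : L | ∃ y : L, z = B y y}

/-- A maximal (proper) subalgebra. -/
def IsMaxSubalg {F L : Type*} [Field F] [AddCommGroup L] [Module F L]
    (B : L →ₗ[F] L →ₗ[F] L) (S : Submodule F L) : Prop :=
  IsLeibSubalg B S ∧ S ≠ ⊤ ∧ ∀ T : Submodule F L, IsLeibSubalg B T → S < T → T = ⊤

/-- `N` is the core of `M`: the largest ideal of `L` contained in `M`. -/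
def IsCore {F L : Type*} [Field F] [AddCommGroup L] [Module F L]
    (B : L →ₗ[F] L →ₗ[F] L) (M N : Submodule F L) : Prop :=
  IsLeibIdeal B N ∧ N ≤ M ∧ ∀ C : Submodule F L, IsLeibIdeal B C → C ≤ M → C ≤ N

/-- Minimal nonnilpotent: nonnilpotent, solvable, all proper subalgebras nilpotent. -/
def MinNonnilpotent {F L : Type*} [Field F] [AddCommGroup L] [Module F L]
    (B : L →ₗ[F] L →ₗ[F] L) : Prop :=
  ¬ LeibIsNilpotent B ∧ LeibIsSolvable B ∧
    ∀ S : Submodule F L, IsLeibSubalg B S → S ≠ ⊤ → LeibSubalgNilpotent B S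

/-- Cyclic: generated as an algebra by a single element. -/
def LeibCyclic {F L : Type*} [Field F] [AddCommGroup L] [Module F L]
    (B : L →ₗ[F] L →ₗ[F] L) : Prop :=
  ∃ z : L, ∀ S : Submodule F L, IsLeibSubalg B S → z ∈ S → S = ⊤

/-!
If `L` is nilpotent and `S` is a proper subalgebra, let `L^k` be the last term of the lower
central series not contained in `S`. Both `[L^k, L]` and `[L, L^k]` lie in `L^(k+1) ⊆ S`, so
`L^k` normalizes `S` without being contained in it.

Conversely, the Leibniz identity says that `x ↦ [x, ·]` is a Lie algebra map into `End L`, so if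
every `[x, ·]` is nilpotent, Engel's theorem makes `L` nilpotent. Otherwise pick `x` with
`D = [x, ·]` not nilpotent and let `L₀ = ker D^n` (`n = dim L`) be its Fitting null component:
a proper subalgebra, because `D` is a derivation. The left annihilator `{u | [u, ·] = 0}` is
`D`-invariant and contains `[x, x]`, so `x = x₀ + u` with `x₀ ∈ L₀` and `[u, ·] = 0`.
If `y` normalizes `L₀`, then `D y = [x₀, y] ∈ L₀`, hence `y ∈ L₀`: `L₀` is
self-normalizing.
-/

theorem Module.End.exists_mem_sub_mem_ker_pow {K V : Type*} [DivisionRing K] [AddCommGroup V]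
    [Module K V] [FiniteDimensional K V] {f : Module.End K V} {W : Submodule K V}
    (hW : ∀ w ∈ W, f w ∈ W) {n : ℕ}
    (hn : LinearMap.ker (f ^ (n + 1)) = LinearMap.ker (f ^ n)) {x : V} (hx : f x ∈ W) :
    ∃ u ∈ W, x - u ∈ LinearMap.ker (f ^ n) := by
  -- `f` is injective, hence bijective, on the invariant subspace `W ∩ f^n(V)`
  set W' := W ⊓ LinearMap.range (f ^ n)
  have hW' : ∀ w ∈ W', f w ∈ W' := by
    rintro w ⟨hw, v, rfl⟩
    exact ⟨hW _ hw, f v, by rw [← mul_apply, ← pow_succ, pow_succ', mul_apply]⟩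
  have hinj : Function.Injective (f.restrict hW') := by
    rw [← LinearMap.ker_eq_bot, Submodule.eq_bot_iff]
    intro w hw
    obtain ⟨-, v, hv⟩ := w.2
    have hfv : (f ^ (n + 1)) v = 0 := by
      rw [pow_succ', mul_apply, hv]
      exact congrArg Subtype.val (LinearMap.mem_ker.1 hw)
    rw [← LinearMap.mem_ker, hn, LinearMap.mem_ker, hv] at hfv
    exact Subtype.ext hfv
  have hsurj : Function.Surjective ((f.restrict hW') ^ (n + 1)) := by
    rw [coe_pow]
    exact (LinearMap.injective_iff_surjective.1 hinj).iterate _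
  have hy : (f ^ (n + 1)) x ∈ W' :=
    ⟨by rw [pow_succ, mul_apply]; exact pow_apply_mem_of_forall_mem n hW _ hx,
      f x, by rw [pow_succ, mul_apply]⟩
  obtain ⟨u, hu⟩ := hsurj ⟨_, hy⟩
  rw [pow_restrict] at hu
  refine ⟨u, u.2.1, ?_⟩
  rw [← hn, LinearMap.mem_ker, map_sub, sub_eq_zero]
  exact (congrArg Subtype.val hu).symm

section

variable {F L : Type*} [Field F] [AddCommGroup L] [Module F L] {B : L →ₗ[F] L →ₗ[F] L}

attribute [local instance] LieRing.ofAssociativeRing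

open Module

theorem mem_lbrk {S T : Submodule F L} {s t : L} (hs : s ∈ S) (ht : t ∈ T) :
    B s t ∈ lbrk B S T :=
  Submodule.subset_span ⟨s, hs, t, ht, rfl⟩

theorem lbrk_le {S T U : Submodule F L} (h : ∀ s ∈ S, ∀ t ∈ T, B s t ∈ U) :
    lbrk B S T ≤ U :=
  Submodule.span_le.2 <| by rintro _ ⟨s, hs, t, ht, rfl⟩; exact h s hs t ht

theorem LeibnizId.brk_mem_leibLCS (hB : LeibnizId B) {i j : ℕ} {s t : L}
    (hs : s ∈ leibLCS B i) (ht : t ∈ leibLCS B j) : B s t ∈ leibLCS B (i + j + 1) := by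
  induction i generalizing j s t with
  | zero => rw [Nat.zero_add]; exact mem_lbrk Submodule.mem_top ht
  | succ i ih =>
    induction hs using Submodule.span_induction with
    | mem z hz =>
      obtain ⟨a, -, u, hu, rfl⟩ := hz
      have h₁ : B a (B u t) ∈ leibLCS B (i + 1 + j + 1) := by
        rw [show i + 1 + j + 1 = i + j + 1 + 1 by omega]
        exact mem_lbrk Submodule.mem_top (ih hu ht)
      have h₂ : B u (B a t) ∈ leibLCS B (i + 1 + j + 1) := by
        rw [show i + 1 + j + 1 = i + (j + 1) + 1 by omega]
        exact ih hu (mem_lbrk Submodule.mem_top ht)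
      rw [show B (B a u) t = B a (B u t) - B u (B a t) by rw [hB]; abel]
      exact sub_mem h₁ h₂
    | zero => simp
    | add y z _ _ hy hz => simpa only [map_add, LinearMap.add_apply] using add_mem hy hz
    | smul c y _ hy => simpa only [map_smul, LinearMap.smul_apply] using Submodule.smul_mem _ c hy

theorem le_leibNormalizer {S : Submodule F L} (hS : IsLeibSubalg B S) :
    S ≤ leibNormalizer B S :=
  fun m hm m' hm' => ⟨hS m hm m' hm', hS m' hm' m hm⟩

theorem LeibnizId.leibLCS_le_leibNormalizer (hB : LeibnizId B) {S : Submodule F L} {k : ℕ}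
    (hk : leibLCS B (k + 1) ≤ S) : leibLCS B k ≤ leibNormalizer B S := fun z hz m _ =>
  ⟨hk (by simpa using hB.brk_mem_leibLCS (j := 0) hz Submodule.mem_top),
    hk (mem_lbrk Submodule.mem_top hz)⟩

theorem LeibnizId.lt_leibNormalizer_of_leibLCS_le (hB : LeibnizId B) {S : Submodule F L}
    (hS : IsLeibSubalg B S) (hne : S ≠ ⊤) {k : ℕ} (hk : leibLCS B k ≤ S) :
    S < leibNormalizer B S := by
  induction k with
  | zero => exact absurd (top_le_iff.1 hk) hne
  | succ k ih =>
    by_cases hkS : leibLCS B k ≤ S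
    · exact ih hkS
    · exact lt_of_le_not_ge (le_leibNormalizer hS)
        fun hN => hkS ((hB.leibLCS_le_leibNormalizer hk).trans hN)

theorem LeibnizId.leftMul_brk (hB : LeibnizId B) (a b : L) : B (B a b) = ⁅B a, B b⁆ := by
  ext c
  rw [Ring.lie_def, LinearMap.sub_apply, End.mul_apply, End.mul_apply, hB]
  abel

def leftMulLieSubalgebra (hB : LeibnizId B) : LieSubalgebra F (End F L) :=
  { LinearMap.range B with
    lie_mem' := by
      rintro _ _ ⟨a, rfl⟩ ⟨b, rfl⟩
      exact ⟨B a b, hB.leftMul_brk a b⟩ }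

theorem LeibnizId.leibLCS_le_lowerCentralSeries (hB : LeibnizId B) (k : ℕ) :
    leibLCS B k ≤ LieModule.lowerCentralSeries F (leftMulLieSubalgebra hB) L k := by
  induction k with
  | zero => exact le_top
  | succ k ih =>
    refine lbrk_le fun s _ t ht => ?_
    rw [LieModule.lowerCentralSeries_succ]
    exact LieSubmodule.lie_mem_lie
      (LieSubmodule.mem_top (⟨B s, s, rfl⟩ : leftMulLieSubalgebra hB)) (ih ht)

theorem LeibnizId.leibIsNilpotent_of_forall_isNilpotent [FiniteDimensional F L]
    (hB : LeibnizId B) (h : ∀ x, IsNilpotent (B x)) : LeibIsNilpotent B := by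
  have : LieModule.IsNilpotent (leftMulLieSubalgebra hB) L :=
    (LieModule.isNilpotent_iff_forall' (R := F)).2 fun ⟨_, x, hx⟩ => hx ▸ h x
  obtain ⟨k, hk⟩ := LieModule.IsNilpotent.nilpotent F (leftMulLieSubalgebra hB) L
  exact ⟨k, eq_bot_iff.2 <| (hB.leibLCS_le_lowerCentralSeries k).trans (hk ▸ le_rfl)⟩

theorem pow_add_apply_brk_eq_zero {D : End F L}
    (hD : ∀ a b, D (B a b) = B (D a) b + B a (D b)) {p q : ℕ} {a b : L}
    (ha : (D ^ p) a = 0) (hb : (D ^ q) b = 0) : (D ^ (p + q)) (B a b) = 0 := by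
  induction p generalizing q a b with
  | zero => simp_all
  | succ p ihp =>
    induction q generalizing b with
    | zero => simp_all
    | succ q ihq =>
      rw [pow_succ, End.mul_apply] at ha hb
      have h₁ := ihp ha (show (D ^ (q + 1)) b = 0 by rwa [pow_succ])
      have h₂ := ihq hb
      rw [show p + 1 + (q + 1) = p + (q + 1) + 1 by omega, pow_succ, End.mul_apply, hD,
        map_add, h₁, show p + (q + 1) = p + 1 + q by omega, h₂, add_zero]

theorem LeibnizId.isLeibSubalg_ker_pow_finrank [FiniteDimensional F L] (hB : LeibnizId B)
    (x : L) : IsLeibSubalg B (LinearMap.ker (B x ^ finrank F L)) := fun a ha b hb => by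
  have hab := pow_add_apply_brk_eq_zero (hB x) (LinearMap.mem_ker.1 ha) (LinearMap.mem_ker.1 hb)
  rwa [← LinearMap.mem_ker, End.ker_pow_eq_ker_pow_finrank_of_le (by omega)] at hab

theorem LeibnizId.leibNormalizer_ker_pow_finrank_le [FiniteDimensional F L] (hB : LeibnizId B)
    (x : L) :
    leibNormalizer B (LinearMap.ker (B x ^ finrank F L)) ≤ LinearMap.ker (B x ^ finrank F L) := by
  have hinv : ∀ v ∈ LinearMap.ker B, B x v ∈ LinearMap.ker B := fun v hv => by
    rw [LinearMap.mem_ker] at hv ⊢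
    rw [hB.leftMul_brk, hv, lie_zero]
  have hxx : B x x ∈ LinearMap.ker B := by
    rw [LinearMap.mem_ker, hB.leftMul_brk, lie_self]
  obtain ⟨u, hu, hxu⟩ := End.exists_mem_sub_mem_ker_pow hinv
    (End.ker_pow_eq_ker_pow_finrank_of_le (by omega)) hxx
  intro y hy
  have hxy : B x y = B (x - u) y := by
    rw [map_sub, LinearMap.sub_apply, LinearMap.mem_ker.1 hu, LinearMap.zero_apply, sub_zero]
  have hy' : y ∈ LinearMap.ker (B x ^ (finrank F L + 1)) := by
    rw [LinearMap.mem_ker, pow_succ, End.mul_apply, hxy]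
    exact (hy _ hxu).2
  rwa [End.ker_pow_eq_ker_pow_finrank_of_le (by omega)] at hy'

end

/-- A finite-dimensional left Leibniz algebra is nilpotent iff every proper
subalgebra is properly contained in its normalizer. -/
theorem stmt0 {F L : Type*} [Field F] [AddCommGroup L] [Module F L] [FiniteDimensional F L]
    (B : L →ₗ[F] L →ₗ[F] L) (hB : LeibnizId B) :
    LeibIsNilpotent B ↔
      ∀ S : Submodule F L, IsLeibSubalg B S → S ≠ ⊤ → S < leibNormalizer B S := by
  refine ⟨fun ⟨k, hk⟩ S hS hne => hB.lt_leibNormalizer_of_leibLCS_le hS hne (hk ▸ bot_le),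
    fun h => ?_⟩
  by_contra hnil
  obtain ⟨x, hx⟩ := not_forall.1 (mt hB.leibIsNilpotent_of_forall_isNilpotent hnil)
  have hne : LinearMap.ker (B x ^ Module.finrank F L) ≠ ⊤ :=
    fun htop => hx ⟨_, LinearMap.ker_eq_top.1 htop⟩
  exact (h _ (hB.isLeibSubalg_ker_pow_finrank x) hne).not_ge
    (hB.leibNormalizer_ker_pow_finrank_le x)
end

section
/- Let L be a finite-dimensional solvable left Leibniz algebra and M a self-normalizing maximal subalgebra of L with core N. Then L/N is not nilpotent. -/
set_option linter.unnecessarySimpa false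

section Aux
variable {F L : Type*} [Field F] [AddCommGroup L] [Module F L]

lemma lbrk_mem (B : L →ₗ[F] L →ₗ[F] L) {S T : Submodule F L} {s t : L}
    (hs : s ∈ S) (ht : t ∈ T) : B s t ∈ lbrk B S T :=
  Submodule.subset_span ⟨s, hs, t, ht, rfl⟩

/-- The key compatibility: `[γ_i, γ_j] ⊆ γ_{i+j+1}` for a left Leibniz bracket. -/
lemma leibLCS_brk (B : L →ₗ[F] L →ₗ[F] L) (hB : LeibnizId B) :
    ∀ i j : ℕ, ∀ x ∈ leibLCS B i, ∀ y ∈ leibLCS B j,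
      B x y ∈ leibLCS B (i + j + 1) := by
  intro i
  induction i with
  | zero =>
      intro j x _ y hy
      rw [Nat.zero_add]
      exact lbrk_mem B Submodule.mem_top hy
  | succ i ih =>
      intro j x hx y hy
      -- reduce to span generators of γ_{i+1}
      have hsub : leibLCS B (i + 1) ≤
          Submodule.comap (B.flip y) (leibLCS B (i + 1 + j + 1)) := by
        refine Submodule.span_le.2 ?_
        rintro z ⟨a, -, c, hc, rfl⟩
        simp only [SetLike.mem_coe, Submodule.mem_comap, LinearMap.flip_apply]
        have h1 : B c y ∈ leibLCS B (i + j + 1) := ih j c hc y hy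
        have h2 : B a (B c y) ∈ leibLCS B (i + j + 2) :=
          lbrk_mem B Submodule.mem_top h1
        have h3 : B a y ∈ leibLCS B (j + 1) := lbrk_mem B Submodule.mem_top hy
        have h4 : B c (B a y) ∈ leibLCS B (i + (j + 1) + 1) := ih (j + 1) c hc _ h3
        have key : B (B a c) y = B a (B c y) - B c (B a y) := by
          rw [hB a c y]; abel
        have heq : i + 1 + j + 1 = i + j + 2 := by omega
        rw [key, heq]
        have h4' : B c (B a y) ∈ leibLCS B (i + j + 2) := by
          have : i + (j + 1) + 1 = i + j + 2 := by omega
          rwa [this] at h4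
        exact Submodule.sub_mem _ h2 h4'
      have := hsub hx
      simpa [Submodule.mem_comap] using this

end Aux

/-- `L/N` is not nilpotent; equivalently no term of the lower central series
of `L` is contained in `N`. -/
theorem stmt5 {F L : Type*} [Field F] [AddCommGroup L] [Module F L] [FiniteDimensional F L]
    (B : L →ₗ[F] L →ₗ[F] L) (hB : LeibnizId B) (hsolv : LeibIsSolvable B)
    (M N : Submodule F L) (hM : IsMaxSubalg B M) (hself : leibNormalizer B M = M)
    (hN : IsCore B M N) :
    ∀ n : ℕ, ¬ leibLCS B n ≤ N := by
  intro n hle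
  classical
  have hMtop : M ≠ ⊤ := hM.2.1
  have hex : ∃ k, leibLCS B k ≤ M := ⟨n, hle.trans hN.2.1⟩
  have hk : leibLCS B (Nat.find hex) ≤ M := Nat.find_spec hex
  have hk0 : Nat.find hex ≠ 0 := by
    intro h
    rw [h] at hk
    exact hMtop (top_le_iff.1 (le_trans (by simp [leibLCS]) hk))
  obtain ⟨m, hm⟩ := Nat.exists_eq_succ_of_ne_zero hk0
  have hmin : ¬ leibLCS B m ≤ M := Nat.find_min hex (by omega)
  obtain ⟨x, hx, hxM⟩ := SetLike.not_le_iff_exists.mp hmin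
  apply hxM
  rw [← hself]
  intro y hy
  constructor
  · have := leibLCS_brk B hB m 0 x hx y Submodule.mem_top
    apply hk
    rw [hm]
    simpa using this
  · apply hk
    rw [hm]
    exact lbrk_mem B Submodule.mem_top hx
end

section
/- Let L be a finite-dimensional minimal nonnilpotent left Leibniz algebra (nonnilpotent, solvable, with all proper subalgebras nilpotent). Then L = A ⊕ span{x} as vector spaces for some x ∈ L, where A is the nilradical of L. -/
set_option linter.unnecessarySimpa false

/-- a finite-dimensional minimal nonnilpotent Leibniz algebra decomposes as
`L = A ⊕ span{x}` with `A` the nilradical. -/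
theorem stmt6 {F L : Type*} [Field F] [AddCommGroup L] [Module F L] [FiniteDimensional F L]
    (B : L →ₗ[F] L →ₗ[F] L) (hB : LeibnizId B) (hmin : MinNonnilpotent B)
    (A : Submodule F L)
    (hA : IsLeibIdeal B A ∧ LeibSubalgNilpotent B A ∧
      ∀ C : Submodule F L, IsLeibIdeal B C → LeibSubalgNilpotent B C → C ≤ A) :
    ∃ x : L, A ⊔ Submodule.span F {x} = ⊤ ∧ A ⊓ Submodule.span F {x} = ⊥ := by
  classical
  obtain ⟨hAideal, hAnil, hAmax⟩ := hA
  obtain ⟨hnn, hsolv, hprop⟩ := hmin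
  -- The derived subalgebra
  set D : Submodule F L := lbrk B ⊤ ⊤ with hD
  have hDmem : ∀ x y : L, B x y ∈ D := by
    intro x y
    exact Submodule.subset_span ⟨x, trivial, y, trivial, rfl⟩
  -- D ≠ ⊤, else solvability forces L = 0, hence nilpotent
  have hDne : D ≠ ⊤ := by
    intro hDt
    have hall : ∀ n, leibDerived B n = (⊤ : Submodule F L) := by
      intro n
      induction n with
      | zero => rfl
      | succ n ih => simp [leibDerived, ih, ← hD, hDt]
    obtain ⟨n, hn⟩ := hsolv
    have hbot : (⊤ : Submodule F L) = ⊥ := by rw [← hall n, hn]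
    exact hnn ⟨0, hbot⟩
  -- A ≠ ⊤, else L would be nilpotent
  have hAne : A ≠ ⊤ := by
    intro hAt
    apply hnn
    obtain ⟨n, hn⟩ := hAnil
    refine ⟨n, ?_⟩
    have key : ∀ m, leibLCS B m = leibLCSIn B A m := by
      intro m
      induction m with
      | zero => simp [leibLCS, leibLCSIn, hAt]
      | succ m ih => simp [leibLCS, leibLCSIn, ih, hAt]
    rw [key n, hn]
  -- pick a maximal proper subspace M containing D
  have hwf : WellFounded ((· > ·) : Submodule F L → Submodule F L → Prop) :=
    IsWellFounded.wf
  obtain ⟨M, hMs, hMmax⟩ := hwf.has_min {S : Submodule F L | D ≤ S ∧ S ≠ ⊤}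
    ⟨D, le_refl D, hDne⟩
  obtain ⟨hDM, hMne⟩ := hMs
  -- M is an ideal (it contains all brackets)
  have hMideal : IsLeibIdeal B M :=
    ⟨fun x y _ => hDM (hDmem x y), fun y _ x => hDM (hDmem y x)⟩
  have hMsub : IsLeibSubalg B M := fun x _ y _ => hDM (hDmem x y)
  -- M is nilpotent, hence M ≤ A
  have hMA : M ≤ A := hAmax M hMideal (hprop M hMsub hMne)
  -- M is a coatom: anything strictly above M is ⊤
  have hcoatom : ∀ T : Submodule F L, M < T → T = ⊤ := by
    intro T hMT
    by_contra hTne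
    exact hMmax T ⟨le_trans hDM hMT.le, hTne⟩ hMT
  -- hence A = M
  have hAM : A = M := by
    rcases lt_or_eq_of_le hMA with h | h
    · exact absurd (hcoatom A h) hAne
    · exact h.symm
  -- pick x ∉ A
  obtain ⟨x, hx⟩ : ∃ x : L, x ∉ A := by
    by_contra h
    push_neg at h
    exact hAne (Submodule.eq_top_iff'.mpr h)
  refine ⟨x, ?_, ?_⟩
  · apply hcoatom
    rw [← hAM]
    refine lt_of_le_of_ne le_sup_left ?_
    intro hEq
    exact hx (hEq ▸ (le_sup_right : _ ≤ A ⊔ Submodule.span F {x}) (Submodule.mem_span_singleton_self x))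
  · rw [eq_bot_iff]
    rintro z ⟨hzA, hzx⟩
    obtain ⟨c, rfl⟩ := Submodule.mem_span_singleton.mp hzx
    rcases eq_or_ne c 0 with rfl | hc
    · simp
    · exfalso
      apply hx
      have := A.smul_mem c⁻¹ hzA
      rwa [smul_smul, inv_mul_cancel₀ hc, one_smul] at this
end

section
/- The two-dimensional cyclic Leibniz algebra L = span{z, z²} with products [z,z] = z² and [z,z²] = z² (all other basis products zero) is a minimal nonnilpotent Leibniz algebra: it is solvable, not nilpotent, and every proper subalgebra is nilpotent. -/
set_option linter.unnecessarySimpa false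

/-- the 2-dimensional cyclic Leibniz algebra `L = span{z, z²}` with
`[z,z] = z²`, `[z,z²] = z²` (other basis products zero) is minimal nonnilpotent. -/
theorem stmt12 {F L : Type*} [Field F] [AddCommGroup L] [Module F L]
    (B : L →ₗ[F] L →ₗ[F] L) (hB : LeibnizId B) (z z2 : L)
    (hind : LinearIndependent F ![z, z2])
    (hspan : Submodule.span F {z, z2} = ⊤)
    (h1 : B z z = z2) (h2 : B z z2 = z2) (h3 : B z2 z = 0) (h4 : B z2 z2 = 0) :
    LeibIsSolvable B ∧ ¬ LeibIsNilpotent B ∧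
      ∀ S : Submodule F L, IsLeibSubalg B S → S ≠ ⊤ → LeibSubalgNilpotent B S := by
  -- basic facts
  have hz2ne : z2 ≠ 0 := by simpa using hind.ne_zero 1
  have coords : ∀ x : L, ∃ a b : F, a • z + b • z2 = x := by
    intro x
    have : x ∈ Submodule.span F {z, z2} := hspan ▸ Submodule.mem_top
    exact Submodule.mem_span_pair.mp this
  have hbil : ∀ a b c d : F, B (a • z + b • z2) (c • z + d • z2) = (a * (c + d)) • z2 := by
    intro a b c d
    simp only [map_add, map_smul, LinearMap.add_apply, LinearMap.smul_apply,
      h1, h2, h3, h4, smul_zero, add_zero, smul_smul]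
    rw [mul_add, add_smul]
    ring_nf
  -- the derived/lcs level 1 is contained in span{z2}
  have hz2span : ∀ x y : L, ∃ c : F, B x y = c • z2 := by
    intro x y
    obtain ⟨a, b, hx⟩ := coords x
    obtain ⟨c, d, hy⟩ := coords y
    exact ⟨a * (c + d), by rw [← hx, ← hy, hbil]⟩
  refine ⟨?_, ?_, ?_⟩
  · -- solvable
    refine ⟨2, ?_⟩
    have hD1 : leibDerived B 1 ≤ Submodule.span F {z2} := by
      apply Submodule.span_le.mpr
      rintro w ⟨s, -, t, -, rfl⟩
      obtain ⟨c, hc⟩ := hz2span s t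
      rw [hc]
      exact Submodule.smul_mem _ _ (Submodule.mem_span_singleton_self _)
    have : leibDerived B 2 ≤ ⊥ := by
      apply Submodule.span_le.mpr
      rintro w ⟨s, hs, t, ht, rfl⟩
      obtain ⟨a, rfl⟩ := Submodule.mem_span_singleton.mp (hD1 hs)
      obtain ⟨b, rfl⟩ := Submodule.mem_span_singleton.mp (hD1 ht)
      simp [map_smul, LinearMap.smul_apply, h4]
    exact le_bot_iff.mp this
  · -- not nilpotent
    rintro ⟨n, hn⟩
    have key : ∀ m, z2 ∈ leibLCS B m := by
      intro m
      induction m with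
      | zero => exact Submodule.mem_top
      | succ k ih =>
        exact Submodule.subset_span ⟨z, Submodule.mem_top, z2, ih, h2.symm⟩
    have := key n
    rw [hn] at this
    exact hz2ne (Submodule.mem_bot F |>.mp this)
  · -- proper subalgebras nilpotent
    intro S hS hne
    have habel : ∀ s ∈ S, ∀ t ∈ S, B s t = 0 := by
      intro s hs t ht
      obtain ⟨a, b, hsc⟩ := coords s
      obtain ⟨c, d, htc⟩ := coords t
      have hval : B s t = (a * (c + d)) • z2 := by rw [← hsc, ← htc, hbil]
      by_contra hne0
      have hcoef : a * (c + d) ≠ 0 := by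
        intro h; rw [hval, h, zero_smul] at hne0; exact hne0 rfl
      have ha : a ≠ 0 := fun h => hcoef (by rw [h, zero_mul])
      have hz2S : z2 ∈ S := by
        have hBst : B s t ∈ S := hS s hs t ht
        have : (a * (c + d))⁻¹ • B s t ∈ S := Submodule.smul_mem _ _ hBst
        rwa [hval, smul_smul, inv_mul_cancel₀ hcoef, one_smul] at this
      have hzS : z ∈ S := by
        have : a • z ∈ S := by
          have h' : s - b • z2 ∈ S := Submodule.sub_mem _ hs (Submodule.smul_mem _ _ hz2S)
          have : a • z = s - b • z2 := by rw [← hsc]; abel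
          rwa [this]
        have := Submodule.smul_mem S a⁻¹ this
        rwa [smul_smul, inv_mul_cancel₀ ha, one_smul] at this
      apply hne
      rw [eq_top_iff, ← hspan]
      apply Submodule.span_le.mpr
      rintro w (rfl | rfl)
      · exact hzS
      · exact hz2S
    refine ⟨1, ?_⟩
    apply le_bot_iff.mp
    apply Submodule.span_le.mpr
    rintro w ⟨s, hs, t, ht, rfl⟩
    simp [habel s hs t ht]
end

section
/- The three-dimensional left Leibniz algebra L = span{z, z², z³} over ℂ with [z,z] = z², [z,z²] = z³, [z,z³] = z² + 2i·z³ (all other products of basis elements zero) contains a nonnilpotent proper subalgebra, namely M = span{iz − z², z² + iz³}. -/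
set_option linter.unnecessarySimpa false

/-- the 3-dimensional complex Leibniz algebra `span{z, z², z³}` with
`[z,z] = z²`, `[z,z²] = z³`, `[z,z³] = z² + 2i z³` (others zero) contains the nonnilpotent
proper subalgebra `M = span{iz − z², z² + iz³}`. -/
theorem stmt14 {L : Type*} [AddCommGroup L] [Module ℂ L]
    (B : L →ₗ[ℂ] L →ₗ[ℂ] L) (hB : LeibnizId B) (z z2 z3 : L)
    (hind : LinearIndependent ℂ ![z, z2, z3])
    (hspan : Submodule.span ℂ {z, z2, z3} = ⊤)
    (h1 : B z z = z2) (h2 : B z z2 = z3) (h3 : B z z3 = z2 + (2 * Complex.I) • z3)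
    (h4 : B z2 z = 0) (h5 : B z2 z2 = 0) (h6 : B z2 z3 = 0)
    (h7 : B z3 z = 0) (h8 : B z3 z2 = 0) (h9 : B z3 z3 = 0) :
    IsLeibSubalg B (Submodule.span ℂ {Complex.I • z - z2, z2 + Complex.I • z3}) ∧
      Submodule.span ℂ {Complex.I • z - z2, z2 + Complex.I • z3} ≠ ⊤ ∧
      ¬ LeibSubalgNilpotent B
        (Submodule.span ℂ {Complex.I • z - z2, z2 + Complex.I • z3}) := by
  set a := Complex.I • z - z2 with ha_def
  set b := z2 + Complex.I • z3 with hb_def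
  set M := Submodule.span ℂ ({a, b} : Set L) with hM
  have haa : B a a = -b := by
    simp only [ha_def, hb_def, map_sub, map_smul, map_add, LinearMap.add_apply, LinearMap.smul_apply,
      LinearMap.sub_apply,
      h1, h2, h4, h5, smul_sub, smul_smul, Complex.I_mul_I]
    module
  have hab : B a b = -b := by
    simp only [ha_def, hb_def, map_sub, map_smul, map_add, LinearMap.add_apply, LinearMap.smul_apply,
      LinearMap.sub_apply,
      h2, h3, h5, h6, smul_add, smul_smul, Complex.I_mul_I]
    match_scalars <;> first
      | ring1
      | linear_combination (2 : ℂ) * Complex.I * Complex.I_sq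
      | linear_combination ((1 : ℂ) - 2 * Complex.I) * Complex.I_sq
      | linear_combination Complex.I_sq
      | linear_combination ((1 : ℂ) + 2 * Complex.I) * Complex.I_sq
  have hba : B b a = 0 := by
    simp only [ha_def, hb_def, map_sub, map_smul, map_add, LinearMap.add_apply, LinearMap.smul_apply,
      LinearMap.sub_apply, h4, h5, h7, h8]
    module
  have hbb : B b b = 0 := by
    simp only [hb_def, map_sub, map_smul, map_add, LinearMap.add_apply, LinearMap.smul_apply,
      LinearMap.sub_apply, h5, h6, h8, h9]
    module
  have haM : a ∈ M := Submodule.subset_span (by simp)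
  have hbM : b ∈ M := Submodule.subset_span (by simp)
  have hsub : IsLeibSubalg B M := by
    have hgen : ∀ u ∈ ({a, b} : Set L), ∀ v ∈ ({a, b} : Set L), B u v ∈ M := by
      intro u hu v hv
      simp only [Set.mem_insert_iff, Set.mem_singleton_iff] at hu hv
      rcases hu with rfl | rfl <;> rcases hv with rfl | rfl
      · rw [haa]; exact M.neg_mem hbM
      · rw [hab]; exact M.neg_mem hbM
      · rw [hba]; exact M.zero_mem
      · rw [hbb]; exact M.zero_mem
    intro x hx y hy
    have hy' : ∀ u ∈ ({a, b} : Set L), B u y ∈ M := by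
      intro u hu
      have hle : M ≤ Submodule.comap (B u) M := by
        rw [hM, Submodule.span_le]
        intro v hv
        exact hgen u hu v hv
      exact hle hy
    have hle : M ≤ Submodule.comap (B.flip y) M := by
      rw [hM, Submodule.span_le]
      intro u hu
      exact hy' u hu
    exact hle hx
  have hz3 : z3 ∉ M := by
    intro hz3
    rw [hM, Submodule.mem_span_pair] at hz3
    obtain ⟨c1, c2, hc⟩ := hz3
    rw [ha_def, hb_def] at hc
    have h0 : (c1 * Complex.I) • z + (c2 - c1) • z2 + (c2 * Complex.I - 1) • z3 = 0 := by
      linear_combination (norm := module) hc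
    have hli := linearIndependent_iff'.mp hind Finset.univ
      ![c1 * Complex.I, c2 - c1, c2 * Complex.I - 1]
      (by simpa [Fin.sum_univ_three] using h0)
    have e0 : c1 * Complex.I = 0 := by simpa using hli 0 (Finset.mem_univ _)
    have e1 : c2 - c1 = 0 := by simpa using hli 1 (Finset.mem_univ _)
    have e2 : c2 * Complex.I - 1 = 0 := by simpa using hli 2 (Finset.mem_univ _)
    have hc1 : c1 = 0 := by
      rcases mul_eq_zero.mp e0 with h | h
      · exact h
      · exact absurd h Complex.I_ne_zero
    have hc2 : c2 = 0 := by
      have := sub_eq_zero.mp e1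
      rw [this, hc1]
    rw [hc2] at e2
    simp at e2
  refine ⟨hsub, ?_, ?_⟩
  · intro htop
    exact hz3 (htop ▸ Submodule.mem_top)
  · intro ⟨n, hn⟩
    have hbLCS : ∀ m, b ∈ leibLCSIn B M m := by
      intro m
      induction m with
      | zero => exact hbM
      | succ k ih =>
        have : B a b ∈ leibLCSIn B M (k + 1) :=
          Submodule.subset_span ⟨a, haM, b, ih, rfl⟩
        rw [hab] at this
        simpa using (leibLCSIn B M (k+1)).neg_mem this
    have hb0 : b = 0 := by
      have := hbLCS n
      rw [hn] at this
      simpa using this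
    have h0 : (0 : ℂ) • z + (1 : ℂ) • z2 + Complex.I • z3 = 0 := by
      simpa [hb_def] using hb0
    have hli := linearIndependent_iff'.mp hind Finset.univ ![0, 1, Complex.I]
      (by simpa [Fin.sum_univ_three] using h0)
    have : (1 : ℂ) = 0 := by simpa using hli 1 (Finset.mem_univ _)
    exact one_ne_zero this
end

section
/- Fix j,k ≥ 1 and let L = span{x, x², …, x^j, a, a², …, a^k} with nonzero products [x, x^i] = x^{i+1} (with x^{j+1}=0), [a, a^i] = a^{i+1} (with a^{k+1}=0), [x,a] = a, [a,x] = −a, and [x, a^i] = i·a^i for 2 ≤ i ≤ k, all other basis products zero. Then L is a left Leibniz algebra, and Leib(L) = span{x², …, x^j, a², …, a^k}. -/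
set_option linter.unnecessarySimpa false

/-- the algebra with basis `x, x², …, x^j, a, a², …, a^k` (here `X i = xⁱ`,
`A i = aⁱ`) and products `[x,xⁱ] = x^{i+1}` (`x^{j+1} = 0`), `[a,aⁱ] = a^{i+1}`
(`a^{k+1} = 0`), `[x,a] = a = -[a,x]`, `[x,aⁱ] = i·aⁱ`, all other basis products zero,
is a left Leibniz algebra with `Leib(L) = span{x², …, x^j, a², …, a^k}`. -/
theorem stmt15 {F L : Type*} [Field F] [CharZero F] [AddCommGroup L] [Module F L]
    (j k : ℕ) (hj : 1 ≤ j) (hk : 1 ≤ k)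
    (B : L →ₗ[F] L →ₗ[F] L) (X A : ℕ → L)
    (hind : LinearIndependent F
      (Sum.elim (fun i : Fin j => X (i + 1)) (fun i : Fin k => A (i + 1))))
    (hspan : Submodule.span F (X '' Set.Icc 1 j ∪ A '' Set.Icc 1 k) = ⊤)
    (hxx : ∀ i, 1 ≤ i → i < j → B (X 1) (X i) = X (i + 1))
    (hxj : B (X 1) (X j) = 0)
    (haa : ∀ i, 1 ≤ i → i < k → B (A 1) (A i) = A (i + 1))
    (hak : B (A 1) (A k) = 0)
    (hxa : B (X 1) (A 1) = A 1)
    (hax : B (A 1) (X 1) = - A 1)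
    (hxai : ∀ i, 2 ≤ i → i ≤ k → B (X 1) (A i) = (i : F) • A i)
    (haxm : ∀ m, 2 ≤ m → m ≤ j → B (A 1) (X m) = 0)
    (hXhi : ∀ i, 2 ≤ i → i ≤ j → ∀ m,
      (1 ≤ m → m ≤ j → B (X i) (X m) = 0) ∧ (1 ≤ m → m ≤ k → B (X i) (A m) = 0))
    (hAhi : ∀ i, 2 ≤ i → i ≤ k → ∀ m,
      (1 ≤ m → m ≤ j → B (A i) (X m) = 0) ∧ (1 ≤ m → m ≤ k → B (A i) (A m) = 0)) :
    LeibnizId B ∧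
      leibLeib B = Submodule.span F (X '' Set.Icc 2 j ∪ A '' Set.Icc 2 k) := by
    -- notation
  classical
  set G : Set L := X '' Set.Icc 1 j ∪ A '' Set.Icc 1 k with hGdef
  set S2 : Set L := X '' Set.Icc 2 j ∪ A '' Set.Icc 2 k with hS2def
  -- high basis elements act as zero
  have hzX : ∀ i, 2 ≤ i → i ≤ j → B (X i) = 0 := by
    intro i h2 hij
    apply LinearMap.ext_on hspan
    rintro v (⟨m, ⟨hm1, hm2⟩, rfl⟩ | ⟨m, ⟨hm1, hm2⟩, rfl⟩)
    · simpa using (hXhi i h2 hij m).1 hm1 hm2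
    · simpa using (hXhi i h2 hij m).2 hm1 hm2
  have hzA : ∀ i, 2 ≤ i → i ≤ k → B (A i) = 0 := by
    intro i h2 hik
    apply LinearMap.ext_on hspan
    rintro v (⟨m, ⟨hm1, hm2⟩, rfl⟩ | ⟨m, ⟨hm1, hm2⟩, rfl⟩)
    · simpa using (hAhi i h2 hik m).1 hm1 hm2
    · simpa using (hAhi i h2 hik m).2 hm1 hm2
  -- uniform action of X 1 on A m
  have hXA : ∀ m, 1 ≤ m → m ≤ k → B (X 1) (A m) = (m : F) • A m := by
    intro m h1 h2
    rcases eq_or_lt_of_le h1 with rfl | h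
    · simpa using hxa
    · exact hxai m h h2
  -- second-level vanishing
  have h1 : ∀ m, 1 ≤ m → m ≤ j → B (B (X 1) (X m)) = 0 := by
    intro m hm1 hm2
    rcases lt_or_eq_of_le hm2 with h | h
    · rw [hxx m hm1 h, hzX (m + 1) (by omega) (by omega)]
    · rw [h, hxj, map_zero]
  have h2 : ∀ m, 1 ≤ m → m ≤ k → B (B (A 1) (A m)) = 0 := by
    intro m hm1 hm2
    rcases lt_or_eq_of_le hm2 with h | h
    · rw [haa m hm1 h, hzA (m + 1) (by omega) (by omega)]
    · rw [h, hak, map_zero]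
  have h3 : ∀ m, 2 ≤ m → m ≤ k → B (B (X 1) (A m)) = 0 := by
    intro m hm1 hm2
    rw [hxai m hm1 hm2, map_smul, hzA m hm1 hm2, smul_zero]
  have h4 : ∀ m, 2 ≤ m → m ≤ j → B (B (A 1) (X m)) = 0 := by
    intro m hm1 hm2
    rw [haxm m hm1 hm2, map_zero]
  -- the Leibniz identity on basis triples
  have keyG : ∀ u ∈ G, ∀ v ∈ G, ∀ w ∈ G,
      B u (B v w) = B (B u v) w + B v (B u w) := by
    rintro u (⟨i, ⟨hi1, hi2⟩, rfl⟩ | ⟨i, ⟨hi1, hi2⟩, rfl⟩) v hv w hw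
    · rcases eq_or_lt_of_le hi1 with rfl | hi
      · -- u = X 1
        rcases hv with ⟨m, ⟨hm1, hm2⟩, rfl⟩ | ⟨m, ⟨hm1, hm2⟩, rfl⟩
        · rcases eq_or_lt_of_le hm1 with rfl | hm
          · -- v = X 1
            rw [h1 1 le_rfl hj]; simp
          · -- v = X m, m ≥ 2
            rw [hzX m hm hm2, h1 m hm1 hm2]; simp
        · rcases eq_or_lt_of_le hm1 with rfl | hm
          · -- v = A 1 : the interesting case
            rw [hxa]
            rcases hw with ⟨p, ⟨hp1, hp2⟩, rfl⟩ | ⟨p, ⟨hp1, hp2⟩, rfl⟩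
            · rcases eq_or_lt_of_le hp1 with rfl | hp
              · -- w = X 1
                rcases lt_or_eq_of_le hj with h | h
                · rw [hax, hxx 1 le_rfl h, haxm 2 le_rfl h]
                  simp [hxa]
                · subst h
                  rw [hax, hxj]
                  simp [hxa]
              · -- w = X p, p ≥ 2
                rcases lt_or_eq_of_le hp2 with h | h
                · rw [haxm p hp hp2, hxx p hp1 h, haxm (p + 1) (by omega) (by omega)]
                  simp
                · rw [haxm p hp hp2, h, hxj]
                  simp
            · -- w = A p
              rcases lt_or_eq_of_le hp2 with h | h
              · rw [haa p hp1 h, hXA (p + 1) (by omega) (by omega), hXA p hp1 hp2,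
                  map_smul, haa p hp1 h]
                push_cast
                module
              · rw [h, hak, hXA k (by omega) le_rfl, map_smul, hak]
                simp
          · -- v = A m, m ≥ 2
            rw [hzA m hm hm2, h3 m hm hm2]; simp
      · -- u = X i, i ≥ 2 : B u = 0
        rw [hzX i hi hi2]; simp
    · rcases eq_or_lt_of_le hi1 with rfl | hi
      · -- u = A 1
        rcases hv with ⟨m, ⟨hm1, hm2⟩, rfl⟩ | ⟨m, ⟨hm1, hm2⟩, rfl⟩
        · rcases eq_or_lt_of_le hm1 with rfl | hm
          · -- v = X 1 : interesting case
            rw [hax]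
            rcases hw with ⟨p, ⟨hp1, hp2⟩, rfl⟩ | ⟨p, ⟨hp1, hp2⟩, rfl⟩
            · rcases eq_or_lt_of_le hp1 with rfl | hp
              · -- w = X 1
                rcases lt_or_eq_of_le hj with h | h
                · rw [hxx 1 le_rfl h, haxm 2 le_rfl h]
                  simp [hax, hxa]
                · subst h
                  rw [hxj]
                  simp [hax, hxa]
              · -- w = X p, p ≥ 2
                rcases lt_or_eq_of_le hp2 with h | h
                · rw [hxx p hp1 h, haxm (p + 1) (by omega) (by omega),
                    haxm p hp hp2]
                  simp [haxm p hp hp2]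
                · rw [h, hxj, haxm j (by omega) le_rfl]
                  simp [haxm j (by omega) le_rfl]
            · -- w = A p
              rcases lt_or_eq_of_le hp2 with h | h
              · rw [hXA p hp1 hp2, map_smul, haa p hp1 h,
                  hXA (p + 1) (by omega) (by omega)]
                simp only [map_neg, LinearMap.neg_apply, haa p hp1 h]
                push_cast
                module
              · rw [h, hXA k (by omega) le_rfl, map_smul, hak]
                simp [hak]
          · -- v = X m, m ≥ 2
            rw [hzX m hm hm2, h4 m hm hm2]; simp
        · rcases eq_or_lt_of_le hm1 with rfl | hm
          · -- v = A 1
            rw [h2 1 le_rfl hk]; simp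
          · -- v = A m, m ≥ 2
            rw [hzA m hm hm2, h2 m hm1 hm2]; simp
      · -- u = A i, i ≥ 2
        rw [hzA i hi hi2]; simp
  -- extend to all of L in w
  have step1 : ∀ u ∈ G, ∀ v ∈ G, ∀ w : L,
      B u (B v w) = B (B u v) w + B v (B u w) := by
    intro u hu v hv
    have hmaps : (B u).comp (B v) = B (B u v) + (B v).comp (B u) := by
      apply LinearMap.ext_on hspan
      intro w hw
      simpa using keyG u hu v hv w hw
    intro w
    simpa using LinearMap.congr_fun hmaps w
  -- extend in v
  have step2 : ∀ u ∈ G, ∀ v w : L,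
      B u (B v w) = B (B u v) w + B v (B u w) := by
    intro u hu v
    have hv : v ∈ Submodule.span F G := by rw [hspan]; trivial
    induction hv using Submodule.span_induction with
    | mem v hv => exact step1 u hu v hv
    | zero => intro w; simp
    | add v₁ v₂ _ _ ih₁ ih₂ =>
        intro w
        simp only [map_add, LinearMap.add_apply]
        rw [ih₁ w, ih₂ w]
        abel
    | smul a v _ ih =>
        intro w
        simp only [map_smul, LinearMap.smul_apply]
        rw [ih w, smul_add]
  -- extend in u
  have step3 : ∀ u v w : L,
      B u (B v w) = B (B u v) w + B v (B u w) := by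
    intro u
    have hu : u ∈ Submodule.span F G := by rw [hspan]; trivial
    induction hu using Submodule.span_induction with
    | mem u hu => exact step2 u hu
    | zero => intro v w; simp
    | add u₁ u₂ _ _ ih₁ ih₂ =>
        intro v w
        simp only [map_add, LinearMap.add_apply]
        rw [ih₁ v w, ih₂ v w]
        abel
    | smul a u _ ih =>
        intro v w
        simp only [map_smul, LinearMap.smul_apply]
        rw [ih v w, smul_add]
  refine ⟨step3, ?_⟩
  -- membership helpers for S2
  have hXin : ∀ m, 2 ≤ m → m ≤ j → X m ∈ Submodule.span F S2 := by
    intro m h2 hm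
    exact Submodule.subset_span (Or.inl ⟨m, ⟨h2, hm⟩, rfl⟩)
  have hAin : ∀ m, 2 ≤ m → m ≤ k → A m ∈ Submodule.span F S2 := by
    intro m h2 hm
    exact Submodule.subset_span (Or.inr ⟨m, ⟨h2, hm⟩, rfl⟩)
  apply le_antisymm
  · -- leibLeib ≤ span S2
    have hsymG : ∀ u ∈ G, ∀ v ∈ G, B u v + B v u ∈ Submodule.span F S2 := by
      rintro u (⟨m, ⟨hm1, hm2⟩, rfl⟩ | ⟨m, ⟨hm1, hm2⟩, rfl⟩)
        v (⟨p, ⟨hp1, hp2⟩, rfl⟩ | ⟨p, ⟨hp1, hp2⟩, rfl⟩)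
      · -- X m, X p
        rcases eq_or_lt_of_le hm1 with rfl | hm
        · rcases eq_or_lt_of_le hp1 with rfl | hp
          · -- X1 X1
            rcases lt_or_eq_of_le hj with h | h
            · rw [hxx 1 le_rfl h]
              exact add_mem (hXin 2 le_rfl h) (hXin 2 le_rfl h)
            · subst h
              rw [hxj]
              simpa using Submodule.zero_mem _
          · -- X1 Xp, p ≥ 2
            rw [hzX p hp hp2, LinearMap.zero_apply, add_zero]
            rcases lt_or_eq_of_le hp2 with h | h
            · rw [hxx p hp1 h]; exact hXin (p + 1) (by omega) (by omega)
            · rw [h, hxj]; exact Submodule.zero_mem _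
        · rcases eq_or_lt_of_le hp1 with rfl | hp
          · -- Xm X1, m ≥ 2
            rw [hzX m hm hm2, LinearMap.zero_apply, zero_add]
            rcases lt_or_eq_of_le hm2 with h | h
            · rw [hxx m hm1 h]; exact hXin (m + 1) (by omega) (by omega)
            · rw [h, hxj]; exact Submodule.zero_mem _
          · rw [hzX m hm hm2, hzX p hp hp2]
            simpa using Submodule.zero_mem _
      · -- X m, A p
        rcases eq_or_lt_of_le hm1 with rfl | hm
        · rcases eq_or_lt_of_le hp1 with rfl | hp
          · rw [hxa, hax]
            simpa using Submodule.zero_mem _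
          · rw [hzA p hp hp2, LinearMap.zero_apply, add_zero, hxai p hp hp2]
            exact Submodule.smul_mem _ _ (hAin p hp hp2)
        · rw [hzX m hm hm2]
          rcases eq_or_lt_of_le hp1 with rfl | hp
          · rw [haxm m hm hm2]
            simpa using Submodule.zero_mem _
          · rw [hzA p hp hp2]
            simpa using Submodule.zero_mem _
      · -- A m, X p
        rcases eq_or_lt_of_le hp1 with rfl | hp
        · rcases eq_or_lt_of_le hm1 with rfl | hm
          · rw [hxa, hax]
            simpa using Submodule.zero_mem _
          · rw [hzA m hm hm2, LinearMap.zero_apply, zero_add, hxai m hm hm2]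
            exact Submodule.smul_mem _ _ (hAin m hm hm2)
        · rw [hzX p hp hp2]
          rcases eq_or_lt_of_le hm1 with rfl | hm
          · rw [haxm p hp hp2]
            simpa using Submodule.zero_mem _
          · rw [hzA m hm hm2]
            simpa using Submodule.zero_mem _
      · -- A m, A p
        rcases eq_or_lt_of_le hm1 with rfl | hm
        · rcases eq_or_lt_of_le hp1 with rfl | hp
          · rcases lt_or_eq_of_le hk with h | h
            · rw [haa 1 le_rfl h]
              exact add_mem (hAin 2 le_rfl h) (hAin 2 le_rfl h)
            · subst h
              rw [hak]
              simpa using Submodule.zero_mem _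
          · rw [hzA p hp hp2, LinearMap.zero_apply, add_zero]
            rcases lt_or_eq_of_le hp2 with h | h
            · rw [haa p hp1 h]; exact hAin (p + 1) (by omega) (by omega)
            · rw [h, hak]; exact Submodule.zero_mem _
        · rcases eq_or_lt_of_le hp1 with rfl | hp
          · rw [hzA m hm hm2, LinearMap.zero_apply, zero_add]
            rcases lt_or_eq_of_le hm2 with h | h
            · rw [haa m hm1 h]; exact hAin (m + 1) (by omega) (by omega)
            · rw [h, hak]; exact Submodule.zero_mem _
          · rw [hzA m hm hm2, hzA p hp hp2]
            simpa using Submodule.zero_mem _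
    have hsymL : ∀ u v : L, B u v + B v u ∈ Submodule.span F S2 := by
      have key : ∀ u ∈ Submodule.span F G, ∀ v ∈ Submodule.span F G,
          B u v + B v u ∈ Submodule.span F S2 := by
        intro u hu
        induction hu using Submodule.span_induction with
        | mem u hu =>
            intro v hv
            induction hv using Submodule.span_induction with
            | mem v hv => exact hsymG u hu v hv
            | zero => simpa using Submodule.zero_mem _
            | add v₁ v₂ _ _ ih₁ ih₂ =>
                simp only [map_add, LinearMap.add_apply]
                have heq : B u v₁ + B u v₂ + (B v₁ u + B v₂ u)
                    = (B u v₁ + B v₁ u) + (B u v₂ + B v₂ u) := by abel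
                rw [heq]
                exact add_mem ih₁ ih₂
            | smul a v _ ih =>
                simp only [map_smul, LinearMap.smul_apply]
                rw [← smul_add]
                exact Submodule.smul_mem _ a ih
        | zero => intro v hv; simpa using Submodule.zero_mem _
        | add u₁ u₂ _ _ ih₁ ih₂ =>
            intro v hv
            simp only [map_add, LinearMap.add_apply]
            have heq : B u₁ v + B u₂ v + (B v u₁ + B v u₂)
                = (B u₁ v + B v u₁) + (B u₂ v + B v u₂) := by abel
            rw [heq]
            exact add_mem (ih₁ v hv) (ih₂ v hv)
        | smul a u _ ih =>
            intro v hv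
            simp only [map_smul, LinearMap.smul_apply]
            rw [← smul_add]
            exact Submodule.smul_mem _ a (ih v hv)
      intro u v
      exact key u (by rw [hspan]; trivial) v (by rw [hspan]; trivial)
    rw [leibLeib]
    apply Submodule.span_le.mpr
    rintro z ⟨y, rfl⟩
    have hy := hsymL y y
    have h2y : B y y + B y y = (2 : F) • B y y := by rw [two_smul]
    have hrepr : B y y = (2 : F)⁻¹ • (B y y + B y y) := by
      rw [h2y, smul_smul, inv_mul_cancel₀ (two_ne_zero), one_smul]
    rw [hrepr]
    exact Submodule.smul_mem _ _ hy
  · -- span S2 ≤ leibLeib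
    have hsq : ∀ y : L, B y y ∈ leibLeib B := fun y =>
      Submodule.subset_span ⟨y, rfl⟩
    have hX2 : 1 < j → X 2 ∈ leibLeib B := by
      intro h
      have := hsq (X 1)
      rwa [hxx 1 le_rfl h] at this
    have hA2 : 1 < k → A 2 ∈ leibLeib B := by
      intro h
      have := hsq (A 1)
      rwa [haa 1 le_rfl h] at this
    have hXmem : ∀ m, 2 ≤ m → m ≤ j → X m ∈ leibLeib B := by
      intro m h2 hmj
      rcases eq_or_lt_of_le h2 with rfl | h3
      · exact hX2 (by omega)
      · have hj2 : 1 < j := by omega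
        have hm' : m - 1 + 1 = m := by omega
        have e : B (X 1 + X (m - 1)) (X 1 + X (m - 1)) = X 2 + X m := by
          simp only [map_add, LinearMap.add_apply]
          rw [hxx 1 le_rfl hj2, hxx (m - 1) (by omega) (by omega), hm',
            hzX (m - 1) (by omega) (by omega)]
          simp
        have hmem := hsq (X 1 + X (m - 1))
        rw [e] at hmem
        have := Submodule.sub_mem _ hmem (hX2 hj2)
        simpa using this
    have hAmem : ∀ m, 2 ≤ m → m ≤ k → A m ∈ leibLeib B := by
      intro m h2 hmk
      rcases eq_or_lt_of_le h2 with rfl | h3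
      · exact hA2 (by omega)
      · have hk2 : 1 < k := by omega
        have hm' : m - 1 + 1 = m := by omega
        have e : B (A 1 + A (m - 1)) (A 1 + A (m - 1)) = A 2 + A m := by
          simp only [map_add, LinearMap.add_apply]
          rw [haa 1 le_rfl hk2, haa (m - 1) (by omega) (by omega), hm',
            hzA (m - 1) (by omega) (by omega)]
          simp
        have hmem := hsq (A 1 + A (m - 1))
        rw [e] at hmem
        have := Submodule.sub_mem _ hmem (hA2 hk2)
        simpa using this
    apply Submodule.span_le.mpr
    rintro z (⟨m, ⟨h2, hm⟩, rfl⟩ | ⟨m, ⟨h2, hm⟩, rfl⟩)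
    · exact hXmem m h2 hm
    · exact hAmem m h2 hm
end
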